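/- arXiv:2501.11883 — 4 statements merged into one kernel-verified Lean document; each statement's English description precedes it below -/
import Mathlib

section
/- Let 0 < q < 1, p₁ = 4q(1−q)((1−q)² + q²), and p₂ = 4q²(1−q)²/(1 − p₁). Let E = (e₁, e₂, e₃, e₄) be an i.i.d. Bernoulli(q) vector. Then the conditional probability, given that e₁⊕e₂⊕e₃⊕e₄ = 0 and e₂ ⊕ e₄ = 0, that e₃ ⊕ e₄ = 1 equals p₃ := 2q²(1−q)²/((1 − p₁)(1 − p₂)). Concretely, ∑_{e: e₁⊕e₂⊕e₃⊕e₄=0, e₂⊕e₄=0, e₃⊕e₄=1} P_q(e) = 2q²(1−q)², and ∑_{e: e₁⊕e₂⊕e₃⊕e₄=0, e₂⊕e₄=0} P_q(e) = (1 − p₁)(1 − p₂) > 0. (This is the third-round erasure probability in the polarization-based protocol with N = 4; the constraint e₃⊕e₄ corresponds to the third column (0,0,1,1)ᵀ of G₄.) -/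
open Finset

/-- Hamming weight of a binary string `e ∈ {0,1}^n`. -/
def wt {n : ℕ} (e : Fin n → Bool) : ℕ := (Finset.univ.filter fun i => e i = true).card

/-- i.i.d. Bernoulli(q) probability of the binary string `e ∈ {0,1}^n`. -/
noncomputable def Pq (q : ℝ) {n : ℕ} (e : Fin n → Bool) : ℝ :=
  q ^ wt e * (1 - q) ^ (n - wt e)

/-!
Both parity constraints together say exactly `e₁ = e₃` and `e₂ = e₄`, i.e. `e = (a, b, a, b)`.
By independence the conditioning event therefore has probability `(q² + (1−q)²)²`, and adding
`e₃ ⊕ e₄ = 1`, i.e. `a ≠ b`, leaves `2q²(1−q)²`. On the other side,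
`1 = (q² + (1−q)² + 2q(1−q))²` gives `1 − p₁ = (q² + (1−q)²)² + 4q²(1−q)²`, so that
`(1 − p₁)(1 − p₂) = 1 − p₁ − 4q²(1−q)² = (q² + (1−q)²)²` as well.
-/

theorem Pq_eq_prod (q : ℝ) {n : ℕ} (e : Fin n → Bool) :
    Pq q e = ∏ i, if e i then q else 1 - q := by
  have hcard : #(univ.filter fun i => ¬e i = true) = n - wt e := by
    rw [wt, filter_not, card_sdiff_of_subset (filter_subset _ _), card_univ, Fintype.card_fin]
  rw [Finset.prod_ite, prod_const, prod_const, hcard, Pq, wt]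

theorem filter_parity_checks_eq_image :
    univ.filter (fun e : Fin 4 → Bool =>
        xor (e 0) (xor (e 1) (xor (e 2) (e 3))) = false ∧ xor (e 1) (e 3) = false) =
      univ.image fun ab : Bool × Bool => ![ab.1, ab.2, ab.1, ab.2] := by
  decide

theorem filter_parity_checks_erased_eq_image :
    univ.filter (fun e : Fin 4 → Bool =>
        xor (e 0) (xor (e 1) (xor (e 2) (e 3))) = false ∧ xor (e 1) (e 3) = false ∧
          xor (e 2) (e 3) = true) =
      univ.image fun a : Bool => ![a, !a, a, !a] := by
  decide

theorem sum_Pq_parity_checks (q : ℝ) :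
    ∑ e ∈ univ.filter (fun e : Fin 4 → Bool =>
        xor (e 0) (xor (e 1) (xor (e 2) (e 3))) = false ∧ xor (e 1) (e 3) = false), Pq q e =
      (q ^ 2 + (1 - q) ^ 2) ^ 2 := by
  rw [filter_parity_checks_eq_image, sum_image (by decide)]
  simp only [Pq_eq_prod, Fin.prod_univ_four, Fintype.sum_prod_type, Fintype.sum_bool,
    Matrix.cons_val_zero, Matrix.cons_val_one, Matrix.cons_val, ite_true, ite_false,
    Bool.false_eq_true]
  ring

theorem sum_Pq_parity_checks_erased (q : ℝ) :
    ∑ e ∈ univ.filter (fun e : Fin 4 → Bool =>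
        xor (e 0) (xor (e 1) (xor (e 2) (e 3))) = false ∧ xor (e 1) (e 3) = false ∧
          xor (e 2) (e 3) = true), Pq q e =
      2 * q ^ 2 * (1 - q) ^ 2 := by
  rw [filter_parity_checks_erased_eq_image, sum_image (by decide)]
  simp only [Pq_eq_prod, Fin.prod_univ_four, Fintype.sum_bool, Bool.not_true, Bool.not_false,
    Matrix.cons_val_zero, Matrix.cons_val_one, Matrix.cons_val, ite_true, ite_false,
    Bool.false_eq_true]
  ring

theorem sq_add_one_sub_sq_pos (q : ℝ) : 0 < q ^ 2 + (1 - q) ^ 2 := by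
  nlinarith [sq_nonneg (2 * q - 1)]

theorem one_sub_p₁_mul_one_sub_p₂ (q : ℝ) :
    (1 - 4 * q * (1 - q) * ((1 - q) ^ 2 + q ^ 2)) *
        (1 - 4 * q ^ 2 * (1 - q) ^ 2 / (1 - 4 * q * (1 - q) * ((1 - q) ^ 2 + q ^ 2))) =
      (q ^ 2 + (1 - q) ^ 2) ^ 2 := by
  have hp₁ : 1 - 4 * q * (1 - q) * ((1 - q) ^ 2 + q ^ 2) =
      (q ^ 2 + (1 - q) ^ 2) ^ 2 + 4 * q ^ 2 * (1 - q) ^ 2 := by ring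
  have hpos := sq_add_one_sub_sq_pos q
  rw [hp₁, mul_one_sub, mul_div_cancel₀ _ (by positivity)]
  ring

theorem third_round_erasure_prob_general (q : ℝ) :
    (∑ e ∈ Finset.univ.filter
        (fun e : Fin 4 → Bool =>
          xor (e 0) (xor (e 1) (xor (e 2) (e 3))) = false ∧ xor (e 1) (e 3) = false ∧
            xor (e 2) (e 3) = true), Pq q e)
      = 2 * q ^ 2 * (1 - q) ^ 2 ∧
    (∑ e ∈ Finset.univ.filter
        (fun e : Fin 4 → Bool =>
          xor (e 0) (xor (e 1) (xor (e 2) (e 3))) = false ∧ xor (e 1) (e 3) = false), Pq q e)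
      = (1 - 4 * q * (1 - q) * ((1 - q) ^ 2 + q ^ 2)) *
          (1 - 4 * q ^ 2 * (1 - q) ^ 2 / (1 - 4 * q * (1 - q) * ((1 - q) ^ 2 + q ^ 2))) ∧
    0 < (1 - 4 * q * (1 - q) * ((1 - q) ^ 2 + q ^ 2)) *
          (1 - 4 * q ^ 2 * (1 - q) ^ 2 / (1 - 4 * q * (1 - q) * ((1 - q) ^ 2 + q ^ 2))) ∧
    (∑ e ∈ Finset.univ.filter
        (fun e : Fin 4 → Bool =>
          xor (e 0) (xor (e 1) (xor (e 2) (e 3))) = false ∧ xor (e 1) (e 3) = false ∧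
            xor (e 2) (e 3) = true), Pq q e) /
      (∑ e ∈ Finset.univ.filter
        (fun e : Fin 4 → Bool =>
          xor (e 0) (xor (e 1) (xor (e 2) (e 3))) = false ∧ xor (e 1) (e 3) = false), Pq q e)
      = 2 * q ^ 2 * (1 - q) ^ 2 /
          ((1 - 4 * q * (1 - q) * ((1 - q) ^ 2 + q ^ 2)) *
            (1 - 4 * q ^ 2 * (1 - q) ^ 2 / (1 - 4 * q * (1 - q) * ((1 - q) ^ 2 + q ^ 2)))) := by
  rw [sum_Pq_parity_checks_erased, sum_Pq_parity_checks, one_sub_p₁_mul_one_sub_p₂]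
  exact ⟨rfl, rfl, pow_pos (sq_add_one_sub_sq_pos q) 2, rfl⟩

/-- For `0 < q < 1`, `p₁ = 4q(1−q)((1−q)² + q²)` and `p₂ = 4q²(1−q)²/(1 − p₁)`: for an
i.i.d. Bernoulli(q) vector `(e₁,e₂,e₃,e₄)`, the probability of
`{e₁⊕e₂⊕e₃⊕e₄ = 0, e₂⊕e₄ = 0, e₃⊕e₄ = 1}` equals `2q²(1−q)²`, the probability of
`{e₁⊕e₂⊕e₃⊕e₄ = 0, e₂⊕e₄ = 0}` equals `(1 − p₁)(1 − p₂) > 0`, and hence the conditional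
probability of `e₃ ⊕ e₄ = 1` given both constraints equals
`p₃ = 2q²(1−q)²/((1 − p₁)(1 − p₂))`. -/
theorem third_round_erasure_prob (q : ℝ) (hq0 : 0 < q) (hq1 : q < 1) :
    (∑ e ∈ Finset.univ.filter
        (fun e : Fin 4 → Bool =>
          xor (e 0) (xor (e 1) (xor (e 2) (e 3))) = false ∧ xor (e 1) (e 3) = false ∧
            xor (e 2) (e 3) = true), Pq q e)
      = 2 * q ^ 2 * (1 - q) ^ 2 ∧
    (∑ e ∈ Finset.univ.filter
        (fun e : Fin 4 → Bool =>
          xor (e 0) (xor (e 1) (xor (e 2) (e 3))) = false ∧ xor (e 1) (e 3) = false), Pq q e)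
      = (1 - 4 * q * (1 - q) * ((1 - q) ^ 2 + q ^ 2)) *
          (1 - 4 * q ^ 2 * (1 - q) ^ 2 / (1 - 4 * q * (1 - q) * ((1 - q) ^ 2 + q ^ 2))) ∧
    0 < (1 - 4 * q * (1 - q) * ((1 - q) ^ 2 + q ^ 2)) *
          (1 - 4 * q ^ 2 * (1 - q) ^ 2 / (1 - 4 * q * (1 - q) * ((1 - q) ^ 2 + q ^ 2))) ∧
    (∑ e ∈ Finset.univ.filter
        (fun e : Fin 4 → Bool =>
          xor (e 0) (xor (e 1) (xor (e 2) (e 3))) = false ∧ xor (e 1) (e 3) = false ∧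
            xor (e 2) (e 3) = true), Pq q e) /
      (∑ e ∈ Finset.univ.filter
        (fun e : Fin 4 → Bool =>
          xor (e 0) (xor (e 1) (xor (e 2) (e 3))) = false ∧ xor (e 1) (e 3) = false), Pq q e)
      = 2 * q ^ 2 * (1 - q) ^ 2 /
          ((1 - 4 * q * (1 - q) * ((1 - q) ^ 2 + q ^ 2)) *
            (1 - 4 * q ^ 2 * (1 - q) ^ 2 / (1 - 4 * q * (1 - q) * ((1 - q) ^ 2 + q ^ 2)))) :=
  third_round_erasure_prob_general q
end

section
/- Let 0 < q < 1 and j ≥ 1, and define D_j(q) = H₁^j(q) − H₀^j(q). Then D_j satisfies the recursion D_j(q) = 1 − h(q̄_j(q)) + (1 − 2q̄_j(q)) · D_{j−1}(q), with initial value D₀(q) = 0. -/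
/-!
Chain rule for entropy. Split a vector of length `2^j` into two independent halves of length
`2^(j-1)` with parities `b₁, b₂`. Given odd total parity, `(b₁, b₂)` is `(0,1)` or `(1,0)` with
probability `1/2` each, so `H₁^j = 1 + H₀^{j-1} + H₁^{j-1}`. Given even total parity, both halves
are odd with probability `q̄_j`, so `H₀^j = h(q̄_j) + 2 q̄_j H₁^{j-1} + 2 (1 - q̄_j) H₀^{j-1}`.
Subtracting gives the recursion. The parity-restricted sums `∑_{w(e) ≡ b} P_q(e)` and
`∑_{w(e) ≡ b} P_q(e) log P_q(e)` behave well under concatenation because they are averages of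
the weight enumerators `∑ s^{w(e)} P_q(e) (log P_q(e))` at `s = ±1`.
-/

open Finset

/-- `p̄_j(q) = (1 − (1−2q)^{2^j})/2`. -/
noncomputable def pbar (q : ℝ) (j : ℕ) : ℝ := (1 - (1 - 2 * q) ^ (2 ^ j)) / 2

/-- `q̄_j(q) = p̄_{j−1}(q)²/(1 − p̄_j(q))`. -/
noncomputable def qbar (q : ℝ) (j : ℕ) : ℝ := (pbar q (j - 1)) ^ 2 / (1 - pbar q j)

/-- Binary entropy function (base 2), with `h(0) = h(1) = 0`. -/
noncomputable def binEnt (x : ℝ) : ℝ := -(x * Real.logb 2 x) - (1 - x) * Real.logb 2 (1 - x)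

/-- `Π_b^j(q)`: probability that an i.i.d. Bernoulli(q) vector of length `2^j` has parity `b`. -/
noncomputable def Pib (q : ℝ) (j : ℕ) (b : ℕ) : ℝ := if b = 1 then pbar q j else 1 - pbar q j

/-- `H_b^j(q)`: Shannon entropy (base 2) of an i.i.d. Bernoulli(q) vector of length `2^j`
conditioned on its parity being `b`. -/
noncomputable def Hcond (q : ℝ) (j : ℕ) (b : ℕ) : ℝ :=
  -∑ e ∈ Finset.univ.filter (fun e : Fin (2 ^ j) → Bool => wt e % 2 = b),
      (Pq q e / Pib q j b) * Real.logb 2 (Pq q e / Pib q j b)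

open Real

section Bits

variable {m k n : ℕ}

lemma wt_eq_sum (e : Fin n → Bool) : wt e = ∑ i, if e i then 1 else 0 :=
  card_filter _ _

lemma wt_le (e : Fin n → Bool) : wt e ≤ n :=
  (card_filter_le _ _).trans_eq (card_fin n)

lemma wt_append (e₁ : Fin m → Bool) (e₂ : Fin k → Bool) :
    wt (Fin.append e₁ e₂) = wt e₁ + wt e₂ := by
  simp only [wt_eq_sum, Fin.sum_univ_add, Fin.append_left, Fin.append_right]

lemma Pq_append (q : ℝ) (e₁ : Fin m → Bool) (e₂ : Fin k → Bool) :
    Pq q (Fin.append e₁ e₂) = Pq q e₁ * Pq q e₂ := by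
  have h₁ := wt_le e₁
  have h₂ := wt_le e₂
  rw [Pq, Pq, Pq, wt_append, show m + k - (wt e₁ + wt e₂) = (m - wt e₁) + (k - wt e₂) by omega,
    pow_add, pow_add]
  ring

lemma pow_wt_mul_Pq (q s : ℝ) (e : Fin n → Bool) :
    s ^ wt e * Pq q e = ∏ i, if e i then s * q else 1 - q := by
  have hcompl : (univ.filter fun i => ¬e i = true).card = n - wt e := by
    have := card_filter_add_card_filter_not (s := univ) (fun i => e i = true)
    rw [card_fin] at this
    unfold wt
    omega
  rw [prod_ite, prod_const, prod_const, hcompl, Pq, mul_pow]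
  unfold wt
  ring

lemma sum_fin_append (f : (Fin (m + k) → Bool) → ℝ) :
    ∑ e, f e = ∑ e₁ : Fin m → Bool, ∑ e₂ : Fin k → Bool, f (Fin.append e₁ e₂) := by
  rw [← (Fin.appendEquiv m k).sum_comp, Fintype.sum_prod_type]
  rfl

end Bits

section WeightEnumerators

variable (q s : ℝ)

noncomputable def weightEnum (n : ℕ) : ℝ := ∑ e : Fin n → Bool, s ^ wt e * Pq q e

noncomputable def logWeightEnum (n : ℕ) : ℝ :=
  ∑ e : Fin n → Bool, s ^ wt e * (Pq q e * logb 2 (Pq q e))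

lemma weightEnum_eq (n : ℕ) : weightEnum q s n = (1 - q + s * q) ^ n := by
  have hsum : 1 - q + s * q = ∑ b : Bool, if b then s * q else 1 - q := by
    simp only [Fintype.sum_bool, if_true, Bool.false_eq_true, if_false]
    ring
  rw [hsum, Fintype.sum_pow, weightEnum]
  simp only [pow_wt_mul_Pq]

lemma mul_mul_logb_mul (b x y : ℝ) :
    x * y * logb b (x * y) = y * (x * logb b x) + x * (y * logb b y) := by
  rcases eq_or_ne x 0 with rfl | hx
  · simp
  rcases eq_or_ne y 0 with rfl | hy
  · simp
  rw [logb_mul hx hy]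
  ring

lemma logWeightEnum_add (m k : ℕ) :
    logWeightEnum q s (m + k)
      = logWeightEnum q s m * weightEnum q s k + weightEnum q s m * logWeightEnum q s k := by
  simp only [logWeightEnum, weightEnum, sum_fin_append, wt_append, Pq_append, mul_mul_logb_mul,
    sum_mul_sum, ← sum_add_distrib]
  refine sum_congr rfl fun e₁ _ => sum_congr rfl fun e₂ _ => ?_
  ring

end WeightEnumerators

lemma sum_filter_wt_mod_two {n b : ℕ} (hb : b < 2) (f : (Fin n → Bool) → ℝ) :
    ∑ e ∈ univ.filter (fun e : Fin n → Bool => wt e % 2 = b), f e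
      = (∑ e, f e + (-1) ^ b * ∑ e, (-1) ^ wt e * f e) / 2 := by
  rw [sum_filter, mul_sum, ← sum_add_distrib, sum_div]
  refine sum_congr rfl fun e _ => ?_
  rcases Nat.even_or_odd (wt e) with h | h
  · interval_cases b <;> simp [Nat.even_iff.mp h, h.neg_one_pow]
  · interval_cases b <;> simp [Nat.odd_iff.mp h, h.neg_one_pow]

section ParityMasses

variable (q : ℝ)

noncomputable def parityMass (n b : ℕ) : ℝ :=
  ∑ e ∈ univ.filter (fun e : Fin n → Bool => wt e % 2 = b), Pq q e

noncomputable def parityLogMass (n b : ℕ) : ℝ :=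
  ∑ e ∈ univ.filter (fun e : Fin n → Bool => wt e % 2 = b), Pq q e * logb 2 (Pq q e)

variable {b : ℕ}

lemma parityMass_eq (hb : b < 2) (n : ℕ) :
    parityMass q n b = (1 + (-1) ^ b * (1 - 2 * q) ^ n) / 2 := by
  have h₁ := weightEnum_eq q 1 n
  have h₂ := weightEnum_eq q (-1) n
  simp only [weightEnum, one_pow, one_mul] at h₁ h₂
  rw [parityMass, sum_filter_wt_mod_two hb, h₁, h₂]
  ring

lemma parityLogMass_eq (hb : b < 2) (n : ℕ) :
    parityLogMass q n b = (logWeightEnum q 1 n + (-1) ^ b * logWeightEnum q (-1) n) / 2 := by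
  simp only [parityLogMass, sum_filter_wt_mod_two hb, logWeightEnum, one_pow, one_mul]

variable (m k : ℕ)

lemma parityMass_add_zero :
    parityMass q (m + k) 0
      = parityMass q m 0 * parityMass q k 0 + parityMass q m 1 * parityMass q k 1 := by
  simp only [parityMass_eq q two_pos, parityMass_eq q one_lt_two, pow_add]
  ring

lemma parityMass_add_one :
    parityMass q (m + k) 1
      = parityMass q m 0 * parityMass q k 1 + parityMass q m 1 * parityMass q k 0 := by
  simp only [parityMass_eq q two_pos, parityMass_eq q one_lt_two, pow_add]
  ring

lemma parityLogMass_add_zero :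
    parityLogMass q (m + k) 0
      = parityLogMass q m 0 * parityMass q k 0 + parityMass q m 0 * parityLogMass q k 0
        + (parityLogMass q m 1 * parityMass q k 1 + parityMass q m 1 * parityLogMass q k 1) := by
  simp only [parityLogMass_eq q two_pos, parityLogMass_eq q one_lt_two, parityMass_eq q two_pos,
    parityMass_eq q one_lt_two, logWeightEnum_add, weightEnum_eq]
  ring

lemma parityLogMass_add_one :
    parityLogMass q (m + k) 1
      = parityLogMass q m 0 * parityMass q k 1 + parityMass q m 0 * parityLogMass q k 1
        + (parityLogMass q m 1 * parityMass q k 0 + parityMass q m 1 * parityLogMass q k 0) := by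
  simp only [parityLogMass_eq q two_pos, parityLogMass_eq q one_lt_two, parityMass_eq q two_pos,
    parityMass_eq q one_lt_two, logWeightEnum_add, weightEnum_eq]
  ring

end ParityMasses

lemma parityMass_pos {q : ℝ} (hq0 : 0 < q) (hq1 : q < 1) {b n : ℕ} (hb : b < 2) (hn : n ≠ 0) :
    0 < parityMass q n b := by
  have hr : |1 - 2 * q| < 1 := abs_lt.mpr ⟨by linarith, by linarith⟩
  have hrn : |(1 - 2 * q) ^ n| < 1 := by
    rw [abs_pow]; exact pow_lt_one₀ (abs_nonneg _) hr hn
  obtain ⟨hlo, hhi⟩ := abs_lt.mp hrn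
  rw [parityMass_eq q hb]
  interval_cases b <;> norm_num <;> linarith

lemma div_mul_logb_div (b p z : ℝ) :
    p / z * logb b (p / z) = p * logb b p / z - p / z * logb b z := by
  rcases eq_or_ne p 0 with rfl | hp
  · simp
  rcases eq_or_ne z 0 with rfl | hz
  · simp
  rw [logb_div hp hz]
  ring

lemma binEnt_div_add {x y : ℝ} (hx : 0 < x) (hy : 0 < y) :
    binEnt (y / (x + y)) = logb 2 (x + y) - (x * logb 2 x + y * logb 2 y) / (x + y) := by
  have hxy : 0 < x + y := add_pos hx hy
  rw [binEnt, show 1 - y / (x + y) = x / (x + y) by field_simp; ring,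
    logb_div hy.ne' hxy.ne', logb_div hx.ne' hxy.ne']
  field_simp
  ring

lemma Hcond_zero (q : ℝ) (b : ℕ) : Hcond q 0 b = 0 := by
  rw [Hcond, neg_eq_zero]
  refine sum_eq_zero fun e he => ?_
  have hPq : Pq q e = Pib q 0 b := by
    have hw : wt e ≤ 1 := wt_le e
    obtain rfl : wt e = b := by simp only [mem_filter] at he; omega
    interval_cases h : wt e <;> simp [Pq, Pib, pbar, h]
  rw [hPq]
  rcases eq_or_ne (Pib q 0 b) 0 with h | h
  · simp [h]
  · simp [div_self h]

section Entropy

variable {q : ℝ}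

lemma Pib_eq_parityMass {b : ℕ} (hb : b < 2) (j : ℕ) : Pib q j b = parityMass q (2 ^ j) b := by
  rw [parityMass_eq q hb, Pib, pbar]
  interval_cases b <;> norm_num <;> ring

lemma Hcond_eq_logb_sub {b : ℕ} (hb : b < 2) (j : ℕ) :
    Hcond q j b
      = logb 2 (parityMass q (2 ^ j) b) - parityLogMass q (2 ^ j) b / parityMass q (2 ^ j) b := by
  set z := parityMass q (2 ^ j) b
  have hz : z / z * logb 2 z = logb 2 z := by
    rcases eq_or_ne z 0 with h | h
    · simp [h]
    · rw [div_self h, one_mul]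
  rw [Hcond, Pib_eq_parityMass hb]
  simp only [div_mul_logb_div, sum_sub_distrib, ← sum_div, ← sum_mul]
  rw [← parityLogMass, ← parityMass, hz]
  ring

theorem Hcond_succ_one (hq0 : 0 < q) (hq1 : q < 1) (m : ℕ) :
    Hcond q (m + 1) 1 = 1 + Hcond q m 0 + Hcond q m 1 := by
  have hz₀ := parityMass_pos hq0 hq1 two_pos (pow_ne_zero m two_ne_zero)
  have hz₁ := parityMass_pos hq0 hq1 one_lt_two (pow_ne_zero m two_ne_zero)
  have hmass : parityMass q (2 ^ m + 2 ^ m) 1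
      = 2 * (parityMass q (2 ^ m) 0 * parityMass q (2 ^ m) 1) := by
    rw [parityMass_add_one]; ring
  rw [Hcond_eq_logb_sub one_lt_two, Hcond_eq_logb_sub two_pos, Hcond_eq_logb_sub one_lt_two,
    pow_succ, mul_two, hmass, parityLogMass_add_one, logb_mul two_ne_zero (by positivity),
    logb_mul hz₀.ne' hz₁.ne', logb_self_eq_one one_lt_two]
  field_simp
  ring

theorem Hcond_succ_zero (hq0 : 0 < q) (hq1 : q < 1) (m : ℕ) :
    Hcond q (m + 1) 0
      = binEnt (qbar q (m + 1)) + 2 * qbar q (m + 1) * Hcond q m 1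
        + 2 * (1 - qbar q (m + 1)) * Hcond q m 0 := by
  have hz₀ := parityMass_pos hq0 hq1 two_pos (pow_ne_zero m two_ne_zero)
  have hz₁ := parityMass_pos hq0 hq1 one_lt_two (pow_ne_zero m two_ne_zero)
  have hqbar : qbar q (m + 1)
      = parityMass q (2 ^ m) 1 ^ 2 / (parityMass q (2 ^ m) 0 ^ 2 + parityMass q (2 ^ m) 1 ^ 2) := by
    have h₁ : pbar q m = parityMass q (2 ^ m) 1 := by
      simpa [Pib] using Pib_eq_parityMass (q := q) one_lt_two m
    have h₀ : 1 - pbar q (m + 1) = parityMass q (2 ^ m) 0 ^ 2 + parityMass q (2 ^ m) 1 ^ 2 := by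
      simpa [Pib, pow_succ, mul_two, parityMass_add_zero, sq] using
        Pib_eq_parityMass (q := q) two_pos (m + 1)
    rw [qbar, Nat.add_sub_cancel, h₁, h₀]
  rw [hqbar, binEnt_div_add (by positivity) (by positivity), Hcond_eq_logb_sub two_pos,
    Hcond_eq_logb_sub two_pos, Hcond_eq_logb_sub one_lt_two, pow_succ, mul_two,
    parityMass_add_zero, parityLogMass_add_zero, logb_pow, logb_pow, ← sq, ← sq]
  field_simp
  ring

end Entropy

/-- For `0 < q < 1`, the difference `D_j(q) = H₁^j(q) − H₀^j(q)` satisfies the recursion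
`D_j(q) = 1 − h(q̄_j(q)) + (1 − 2q̄_j(q))·D_{j−1}(q)` for `j ≥ 1`, with `D₀(q) = 0`. -/
theorem entropy_difference_recursion (q : ℝ) (hq0 : 0 < q) (hq1 : q < 1) :
    (∀ j : ℕ, 1 ≤ j →
      Hcond q j 1 - Hcond q j 0
        = 1 - binEnt (qbar q j) + (1 - 2 * qbar q j) * (Hcond q (j - 1) 1 - Hcond q (j - 1) 0)) ∧
    Hcond q 0 1 - Hcond q 0 0 = 0 := by
  refine ⟨fun j hj => ?_, by rw [Hcond_zero, Hcond_zero, sub_self]⟩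
  obtain ⟨m, rfl⟩ := Nat.exists_eq_add_of_le' hj
  rw [Nat.add_sub_cancel, Hcond_succ_one hq0 hq1, Hcond_succ_zero hq0 hq1]
  ring
end

section
/- For every integer j ≥ 1, the derivative of the composition q ↦ h(q̄_j(q)) tends to 0 as q → 0⁺; that is, lim_{q→0⁺} (log₂((1 − q̄_j(q))/q̄_j(q))) · q̄_j′(q) = 0, where for 0 < q < 1 small enough one has 0 < q̄_j(q) < 1 so that the composition is differentiable at q with derivative h′(q̄_j(q)) · q̄_j′(q) and h′(x) = log₂((1−x)/x). -/
/-! Both `p̄_j(q) = q · ∑_{k < 2^j} (1 - 2q)^k` and `p̄_{j-1}` vanish to first order at `0`,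
so `q̄_j(q) = q² F(q)` and `q̄_j'(q) = q B(q)` with `F`, `B` continuous at `0` and
`F(0) = 4^{j-1} > 0`. Hence
`log((1 - q̄_j)/q̄_j) · q̄_j' = (log(1 - q² F) - log F - 2 log q) · q · B`,
which tends to `0` because `q log q → 0`. -/

open Real Filter Set Topology

noncomputable def pbarFactor (q : ℝ) (j : ℕ) : ℝ :=
  ∑ k ∈ Finset.range (2 ^ j), (1 - 2 * q) ^ k

noncomputable def pbarDeriv (q : ℝ) (j : ℕ) : ℝ := 2 ^ j * (1 - 2 * q) ^ (2 ^ j - 1)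

noncomputable def qbarFactor (q : ℝ) (j : ℕ) : ℝ := pbarFactor q (j - 1) ^ 2 / (1 - pbar q j)

noncomputable def qbarDerivFactor (q : ℝ) (j : ℕ) : ℝ :=
  (2 * pbarFactor q (j - 1) * pbarDeriv q (j - 1) * (1 - pbar q j)
      + q * pbarFactor q (j - 1) ^ 2 * pbarDeriv q j) / (1 - pbar q j) ^ 2

theorem pbar_eq_mul_pbarFactor (q : ℝ) (j : ℕ) : pbar q j = q * pbarFactor q j := by
  have h := geom_sum_mul (1 - 2 * q) (2 ^ j)
  rw [show 1 - 2 * q - 1 = -(2 * q) by ring] at h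
  unfold pbar pbarFactor
  linarith

theorem pbarFactor_zero (j : ℕ) : pbarFactor 0 j = 2 ^ j := by
  simp [pbarFactor]

@[fun_prop]
theorem continuous_pbar (j : ℕ) : Continuous (pbar · j) := by
  unfold pbar; fun_prop

@[fun_prop]
theorem continuous_pbarFactor (j : ℕ) : Continuous (pbarFactor · j) := by
  unfold pbarFactor; fun_prop

@[fun_prop]
theorem continuous_pbarDeriv (j : ℕ) : Continuous (pbarDeriv · j) := by
  unfold pbarDeriv; fun_prop

theorem hasDerivAt_pbar (q : ℝ) (j : ℕ) : HasDerivAt (pbar · j) (pbarDeriv q j) q := by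
  have h := (((hasDerivAt_id' q).const_mul 2).const_sub 1).pow (2 ^ j) |>.const_sub 1 |>.div_const 2
  refine h.congr_deriv ?_
  unfold pbarDeriv; push_cast; ring

theorem pbar_mem_Ioo {q : ℝ} (hq : q ∈ Ioo 0 (1 / 2)) (j : ℕ) :
    pbar q j ∈ Ioo 0 (1 / 2) := by
  have hpos : 0 < (1 - 2 * q) ^ 2 ^ j := pow_pos (by linarith [hq.2]) _
  have hlt : (1 - 2 * q) ^ 2 ^ j < 1 :=
    pow_lt_one₀ (by linarith [hq.2]) (by linarith [hq.1]) (by positivity)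
  constructor <;> unfold pbar <;> linarith

theorem qbar_mem_Ioo {q : ℝ} (hq : q ∈ Ioo 0 (1 / 2)) (j : ℕ) : qbar q j ∈ Ioo 0 1 := by
  obtain ⟨h₀, h₁⟩ := pbar_mem_Ioo hq (j - 1)
  obtain ⟨g₀, g₁⟩ := pbar_mem_Ioo hq j
  have hden : 0 < 1 - pbar q j := by linarith
  refine ⟨by unfold qbar; positivity, ?_⟩
  rw [qbar, div_lt_one hden]
  nlinarith

theorem qbar_eq_sq_mul_qbarFactor (q : ℝ) (j : ℕ) : qbar q j = q ^ 2 * qbarFactor q j := by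
  rw [qbar, qbarFactor, pbar_eq_mul_pbarFactor q (j - 1), mul_pow, mul_div_assoc]

theorem continuousAt_qbarFactor (j : ℕ) : ContinuousAt (qbarFactor · j) 0 := by
  unfold qbarFactor
  exact ContinuousAt.div (by fun_prop) (by fun_prop) (by simp [pbar])

theorem qbarFactor_zero_pos (j : ℕ) : 0 < qbarFactor 0 j := by
  rw [qbarFactor, pbarFactor_zero]
  simp [pbar]

theorem continuousAt_qbarDerivFactor (j : ℕ) : ContinuousAt (qbarDerivFactor · j) 0 := by
  unfold qbarDerivFactor
  exact ContinuousAt.div (by fun_prop) (by fun_prop) (by simp [pbar])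

theorem hasDerivAt_qbar {q : ℝ} {j : ℕ} (hq : pbar q j ≠ 1) :
    HasDerivAt (qbar · j) (q * qbarDerivFactor q j) q := by
  have hden : 1 - pbar q j ≠ 0 := sub_ne_zero.mpr hq.symm
  have h := ((hasDerivAt_pbar q (j - 1)).pow 2).div ((hasDerivAt_pbar q j).const_sub 1) hden
  refine h.congr_deriv ?_
  simp only [Pi.pow_apply, qbarDerivFactor, pbar_eq_mul_pbarFactor q (j - 1)]
  field_simp
  push_cast
  ring

theorem binEnt_eq_binEntropy_div_log_two : binEnt = fun x => binEntropy x / log 2 := by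
  ext x
  simp only [binEnt, binEntropy, logb, log_inv]
  ring

theorem hasDerivAt_binEnt {x : ℝ} (h₀ : x ≠ 0) (h₁ : x ≠ 1) :
    HasDerivAt binEnt (logb 2 ((1 - x) / x)) x := by
  rw [binEnt_eq_binEntropy_div_log_two, logb, log_div (sub_ne_zero.mpr h₁.symm) h₀]
  exact (hasDerivAt_binEntropy h₀ h₁).div_const _

theorem tendsto_logb_one_sub_div_sq_mul_mul_self {F : ℝ → ℝ} (hF : ContinuousAt F 0)
    (hF₀ : F 0 ≠ 0) (b : ℝ) :
    Tendsto (fun q => logb b ((1 - q ^ 2 * F q) / (q ^ 2 * F q)) * q) (𝓝 0) (𝓝 0) := by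
  have hG : ContinuousAt (fun q => 1 - q ^ 2 * F q) 0 := by fun_prop
  have hG₀ : (1 : ℝ) - 0 ^ 2 * F 0 ≠ 0 := by simp
  have hlim : Tendsto
      (fun q => ((log (1 - q ^ 2 * F q) - log (F q)) * q - 2 * (q * log q)) / log b)
      (𝓝 0) (𝓝 0) := by
    have := ((((hG.log hG₀).sub (hF.log hF₀)).mul continuousAt_id).sub
      (continuous_mul_log.continuousAt.const_mul 2)).div_const (log b)
    simpa using this.tendsto
  refine hlim.congr' ?_
  filter_upwards [hF.eventually_ne hF₀, hG.eventually_ne hG₀] with q hFq hGq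
  rcases eq_or_ne q 0 with rfl | hq
  · simp
  rw [logb, log_div hGq (mul_ne_zero (pow_ne_zero 2 hq) hFq), log_mul (pow_ne_zero 2 hq) hFq,
    log_pow]
  push_cast
  ring

theorem deriv_binEnt_qbar_vanishes_general (j : ℕ) :
    Filter.Tendsto
      (fun q => Real.logb 2 ((1 - qbar q j) / qbar q j) * deriv (fun x => qbar x j) q)
      (nhdsWithin 0 (Set.Ioi 0)) (nhds 0) ∧
    ∃ ε > (0 : ℝ), ∀ q ∈ Set.Ioo (0 : ℝ) ε,
      0 < qbar q j ∧ qbar q j < 1 ∧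
      HasDerivAt (fun x => binEnt (qbar x j))
        (Real.logb 2 ((1 - qbar q j) / qbar q j) * deriv (fun x => qbar x j) q) q := by
  have hqbar {q : ℝ} (hq : q ∈ Ioo 0 (1 / 2)) :
      HasDerivAt (qbar · j) (q * qbarDerivFactor q j) q :=
    hasDerivAt_qbar ((pbar_mem_Ioo hq j).2.trans (by norm_num)).ne
  constructor
  · have hlim := (tendsto_logb_one_sub_div_sq_mul_mul_self (continuousAt_qbarFactor j)
      (qbarFactor_zero_pos j).ne' 2).mul (continuousAt_qbarDerivFactor j).tendsto
    rw [zero_mul] at hlim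
    refine (hlim.mono_left nhdsWithin_le_nhds).congr' ?_
    filter_upwards [Ioo_mem_nhdsGT (by norm_num : (0 : ℝ) < 1 / 2)] with q hq
    rw [(hqbar hq).deriv, qbar_eq_sq_mul_qbarFactor]
    ring
  · refine ⟨1 / 2, by norm_num, fun q hq => ?_⟩
    obtain ⟨h₀, h₁⟩ := qbar_mem_Ioo hq j
    refine ⟨h₀, h₁, ?_⟩
    rw [(hqbar hq).deriv]
    exact (hasDerivAt_binEnt h₀.ne' h₁.ne).comp q (hqbar hq)

/-- For every `j ≥ 1`, the derivative of `q ↦ h(q̄_j(q))` tends to `0` as `q → 0⁺`: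
`lim_{q→0⁺} log₂((1 − q̄_j(q))/q̄_j(q)) · q̄_j′(q) = 0`; moreover for small enough `q > 0`
one has `0 < q̄_j(q) < 1` and the composition is differentiable at `q` with derivative
`h′(q̄_j(q)) · q̄_j′(q)` where `h′(x) = log₂((1−x)/x)`. -/
theorem deriv_binEnt_qbar_vanishes (j : ℕ) (hj : 1 ≤ j) :
    Filter.Tendsto
      (fun q => Real.logb 2 ((1 - qbar q j) / qbar q j) * deriv (fun x => qbar x j) q)
      (nhdsWithin 0 (Set.Ioi 0)) (nhds 0) ∧
    ∃ ε > (0 : ℝ), ∀ q ∈ Set.Ioo (0 : ℝ) ε,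
      0 < qbar q j ∧ qbar q j < 1 ∧
      HasDerivAt (fun x => binEnt (qbar x j))
        (Real.logb 2 ((1 - qbar q j) / qbar q j) * deriv (fun x => qbar x j) q) q :=
  deriv_binEnt_qbar_vanishes_general j
end

section
/- Let q ∈ [0,1] and set p₁ = 4q(1−q)((1−q)² + q²). Then 8q²(1−q)² + p₁ ≤ 1. Consequently, for 0 < q < 1, both p₂ = 4q²(1−q)²/(1 − p₁) ≤ 1/2 and p₃ = 2q²(1−q)²/((1 − p₁)(1 − p₂)) ≤ 1/2, where 1 − p₂ = (1 − p₁ − 4q²(1−q)²)/(1 − p₁); i.e., all three erasure probabilities of the polarization-based protocol with block length N = 4 are at most 1/2. -/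
/-- For `q ∈ [0,1]` and `p₁ = 4q(1−q)((1−q)² + q²)` one has `8q²(1−q)² + p₁ ≤ 1`;
consequently, for `0 < q < 1`, both `p₂ = 4q²(1−q)²/(1 − p₁) ≤ 1/2` and
`p₃ = 2q²(1−q)²/((1 − p₁)(1 − p₂)) ≤ 1/2`: all three erasure probabilities of the
polarization-based protocol with block length `N = 4` are at most `1/2`. -/
theorem erasure_probs_le_half (q : ℝ) (hq0 : 0 ≤ q) (hq1 : q ≤ 1) :
    8 * q ^ 2 * (1 - q) ^ 2 + 4 * q * (1 - q) * ((1 - q) ^ 2 + q ^ 2) ≤ 1 ∧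
    (0 < q → q < 1 →
      4 * q ^ 2 * (1 - q) ^ 2 / (1 - 4 * q * (1 - q) * ((1 - q) ^ 2 + q ^ 2)) ≤ 1 / 2 ∧
      2 * q ^ 2 * (1 - q) ^ 2 /
          ((1 - 4 * q * (1 - q) * ((1 - q) ^ 2 + q ^ 2)) *
            (1 - 4 * q ^ 2 * (1 - q) ^ 2 / (1 - 4 * q * (1 - q) * ((1 - q) ^ 2 + q ^ 2))))
        ≤ 1 / 2) := by
  have h1 : (0:ℝ) < 1 - 4 * q * (1 - q) * ((1 - q) ^ 2 + q ^ 2) := by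
    nlinarith [sq_nonneg (1 - 2*q + 2*q^2), sq_nonneg (q * (1 - q))]
  refine ⟨by nlinarith [sq_nonneg (1 - 2*q)], fun hq0' hq1' => ?_⟩
  constructor
  · rw [div_le_iff₀ h1]
    nlinarith [sq_nonneg (1 - 2*q)]
  · have key : (1 - 4 * q * (1 - q) * ((1 - q) ^ 2 + q ^ 2)) *
        (1 - 4 * q ^ 2 * (1 - q) ^ 2 / (1 - 4 * q * (1 - q) * ((1 - q) ^ 2 + q ^ 2)))
        = (1 - 2*q + 2*q^2) ^ 2 := by
      field_simp
      ring
    have h2 : (0:ℝ) < 1 - 2*q + 2*q^2 := by nlinarith [sq_nonneg (1 - 2*q)]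
    rw [key, div_le_iff₀ (pow_pos h2 2)]
    nlinarith [sq_nonneg (1 - 2*q)]
end
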